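/- Let G be a group, S a finite subset of G, and C a convexoid on G that is S⁻¹S-midpointed (for all g ∈ G, h ∈ S⁻¹S, every convex set containing both gh and gh⁻¹ has closure containing g; equivalently g lies in the intersection of all convex sets containing {gh, gh⁻¹}). Then C has S-unique corner positioning: for every C ∈ C and every lax corner a of C (a ∈ C with a not in the closure of C \ {a}), there is at most one g ∈ G with a ∈ gS ⊆ C. -/

import Mathlib

open Pointwise

attribute [local instance] Classical.propDecidable

/-- The closure of a finite set `B`: intersection of all members of `𝒞` containing `B`. -/
def memClosure {G : Type*} (𝒞 : Set (Finset G)) (B : Finset G) : Set G :=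
  {x | ∀ C ∈ 𝒞, B ⊆ C → x ∈ C}

/-- A convexoid: `∅` is a member, every finite set is contained in some member, and the
corner addition property holds. -/
def IsConvexoid {G : Type*} (𝒞 : Set (Finset G)) : Prop :=
  (∅ : Finset G) ∈ 𝒞 ∧ (∀ B : Finset G, ∃ C ∈ 𝒞, B ⊆ C) ∧
    ∀ C ∈ 𝒞, ∀ D ∈ 𝒞, C ⊂ D → ∃ a ∈ D, a ∉ C ∧ insert a C ∈ 𝒞

/-! If `a = g₁ s₁ = g₂ s₂` with `g₁ ≠ g₂`, then `h = s₂⁻¹ s₁ ∈ S⁻¹S` is nontrivial and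
`a h = g₂ s₁`, `a h⁻¹ = g₁ s₂` are two points of `C` other than `a`. Midpointedness puts `a`
in the closure of these two points, hence in the closure of `C \ {a}`, so `a` is no lax corner. -/

theorem memClosure_mono {G : Type*} (𝒞 : Set (Finset G)) {B B' : Finset G} (hB : B ⊆ B') :
    memClosure 𝒞 B ⊆ memClosure 𝒞 B' :=
  fun _ hx C hC hB'C => hx C hC (hB.trans hB'C)

theorem exists_ne_one_mul_mem_smul_of_mem_smul_inter {G : Type*} [Group G] {S : Finset G}
    {a g₁ g₂ : G} (h₁ : a ∈ g₁ • S) (h₂ : a ∈ g₂ • S) (hne : g₁ ≠ g₂) :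
    ∃ h ∈ S⁻¹ * S, h ≠ 1 ∧ a * h ∈ g₂ • S ∧ a * h⁻¹ ∈ g₁ • S := by
  obtain ⟨s₁, hs₁, rfl⟩ := Finset.mem_smul_finset.mp h₁
  obtain ⟨s₂, hs₂, ha⟩ := Finset.mem_smul_finset.mp h₂
  simp only [smul_eq_mul] at ha ⊢
  refine ⟨s₂⁻¹ * s₁, Finset.mul_mem_mul (Finset.inv_mem_inv hs₂) hs₁, ?_, ?_, ?_⟩
  · rintro hs
    rw [inv_mul_eq_one] at hs
    subst hs
    exact hne (mul_right_cancel ha.symm)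
  · rw [← ha, show g₂ * s₂ * (s₂⁻¹ * s₁) = g₂ * s₁ by group]
    exact Finset.smul_mem_smul_finset hs₁
  · rw [show g₁ * s₁ * (s₂⁻¹ * s₁)⁻¹ = g₁ * s₂ by group]
    exact Finset.smul_mem_smul_finset hs₂

theorem stmt6_general {G : Type*} [Group G] (S : Finset G) (𝒞 : Set (Finset G))
    (hmid : ∀ g : G, ∀ h ∈ S⁻¹ * S, g ∈ memClosure 𝒞 {g * h, g * h⁻¹}) :
    ∀ C ∈ 𝒞, ∀ a ∈ C, a ∉ memClosure 𝒞 (C.erase a) →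
      ∀ g₁ g₂ : G, a ∈ g₁ • S → g₁ • S ⊆ C → a ∈ g₂ • S → g₂ • S ⊆ C → g₁ = g₂ := by
  intro C _ a _ hcorner g₁ g₂ h₁ hsub₁ h₂ hsub₂
  by_contra hne
  obtain ⟨h, hS, hh, hright, hleft⟩ := exists_ne_one_mul_mem_smul_of_mem_smul_inter h₁ h₂ hne
  have hpair : ({a * h, a * h⁻¹} : Finset G) ⊆ C.erase a := by
    intro x hx
    rcases Finset.mem_insert.mp hx with rfl | hx
    · exact Finset.mem_erase.mpr ⟨by simpa using hh, hsub₂ hright⟩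
    · rw [Finset.mem_singleton.mp hx]
      exact Finset.mem_erase.mpr ⟨by simpa using hh, hsub₁ hleft⟩
  exact hcorner (memClosure_mono 𝒞 hpair (hmid a h hS))

/-- An `S⁻¹S`-midpointed convexoid has `S`-unique corner positioning: every lax corner
of a convex set is covered by at most one translate of `S` inside the set. -/
theorem stmt6 {G : Type*} [Group G] (S : Finset G) (𝒞 : Set (Finset G))
    (hconv : IsConvexoid 𝒞)
    (hmid : ∀ g : G, ∀ h ∈ S⁻¹ * S, g ∈ memClosure 𝒞 {g * h, g * h⁻¹}) :
    ∀ C ∈ 𝒞, ∀ a ∈ C, a ∉ memClosure 𝒞 (C.erase a) →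
      ∀ g₁ g₂ : G, a ∈ g₁ • S → g₁ • S ⊆ C → a ∈ g₂ • S → g₂ • S ⊆ C → g₁ = g₂ :=
  stmt6_general S 𝒞 hmid
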